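/- arXiv:2203.00005 — 2 statements merged into one kernel-verified Lean document; each statement's English description precedes it below -/
import Mathlib

section
/- Let (m_n) be a sequence of complex numbers with m_n → ∞, θ ∈ (0,1), and a ∈ ℂ with a ≠ 0. Then there is no entire function f such that both sup_{t∈[0,θ]} |f(m_n e^{2πit}) − a| → 0 and ∫_{[m_n, m_n e^{2πiθ}]} f(z) dz → 0 as n → ∞. -/
open Complex Filter Set

/-- The contour integral of `f` along the oriented straight segment from `a` to `b`. -/
noncomputable def segIntegral (f : ℂ → ℂ) (a b : ℂ) : ℂ :=
  ∫ t in (0:ℝ)..1, (b - a) * f (a + (t : ℂ) * (b - a))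

/-!
An entire `f` has a primitive, so its integral over the segment `[m, m e^{2πiθ}]` equals its
integral over the arc `t ↦ m e^{2πit}`, `0 ≤ t ≤ θ`. On that arc, of length `2πθ‖m‖`, `f` is
uniformly close to `a`, so the integral is `a (e^{2πiθ} - 1) m + o(m)`. As `e^{2πiθ} ≠ 1` and
`‖m‖ → ∞`, it cannot tend to `0`.
-/

open Asymptotics

section PathIntegral

variable {f F : ℂ → ℂ} {γ γ' : ℝ → ℂ}

theorem integral_deriv_mul_comp_eq_sub (hF : ∀ z, HasDerivAt F (f z) z) (hf : Continuous f)
    (hγ : ∀ t, HasDerivAt γ (γ' t) t) (hγ' : Continuous γ') (s t : ℝ) :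
    ∫ u in s..t, γ' u * f (γ u) = F (γ t) - F (γ s) := by
  have hγc : Continuous γ := continuous_iff_continuousAt.2 fun u => (hγ u).continuousAt
  refine intervalIntegral.integral_eq_sub_of_hasDerivAt (f := F ∘ γ) (fun u _ => ?_)
    (Continuous.intervalIntegrable (by fun_prop) _ _)
  simpa only [mul_comm] using (hF (γ u)).comp u (hγ u)

theorem segIntegral_eq_sub (hF : ∀ z, HasDerivAt F (f z) z) (hf : Continuous f) (z w : ℂ) :
    segIntegral f z w = F w - F z := by
  have hγ : ∀ t : ℝ, HasDerivAt (fun u : ℝ => z + u * (w - z)) (w - z) t := fun t => by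
    simpa using ((hasDerivAt_id t).ofReal_comp.mul_const (w - z)).const_add z
  rw [segIntegral, integral_deriv_mul_comp_eq_sub hF hf hγ continuous_const 0 1]
  simp

theorem norm_segIntegral_sub_le (hf : Differentiable ℂ f) (hγ : ∀ t, HasDerivAt γ (γ' t) t)
    (hγ' : Continuous γ') {a : ℂ} {θ L ε : ℝ} (hθ : 0 ≤ θ) (hL : ∀ t ∈ Icc 0 θ, ‖γ' t‖ ≤ L)
    (hε : ∀ t ∈ Icc 0 θ, ‖f (γ t) - a‖ ≤ ε) :
    ‖segIntegral f (γ 0) (γ θ) - a * (γ θ - γ 0)‖ ≤ L * ε * θ := by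
  obtain ⟨F, hF⟩ := hf.isExactOn_univ
  replace hF : ∀ z, HasDerivAt F (f z) z := fun z => hF z (mem_univ z)
  have hfc := hf.continuous
  have hγc : Continuous γ := continuous_iff_continuousAt.2 fun u => (hγ u).continuousAt
  have hlin : ∀ z, HasDerivAt (fun z => a * z) a z := fun z => by
    simpa using (hasDerivAt_id z).const_mul a
  have hdiff : segIntegral f (γ 0) (γ θ) - a * (γ θ - γ 0)
      = ∫ t in 0..θ, γ' t * (f (γ t) - a) := by
    rw [segIntegral_eq_sub hF hfc, mul_sub,
      ← integral_deriv_mul_comp_eq_sub hF hfc hγ hγ',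
      ← integral_deriv_mul_comp_eq_sub hlin continuous_const hγ hγ',
      ← intervalIntegral.integral_sub (Continuous.intervalIntegrable (by fun_prop) _ _)
        (Continuous.intervalIntegrable (by fun_prop) _ _)]
    simp only [mul_sub]
  rw [hdiff]
  refine (intervalIntegral.norm_integral_le_of_norm_le_const fun t ht => ?_).trans_eq
    (by rw [sub_zero, abs_of_nonneg hθ])
  rw [uIoc_of_le hθ] at ht
  have ht' : t ∈ Icc 0 θ := Ioc_subset_Icc_self ht
  rw [norm_mul]
  exact mul_le_mul (hL t ht') (hε t ht') (norm_nonneg _) ((norm_nonneg _).trans (hL t ht'))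

end PathIntegral

theorem Complex.exp_two_pi_I_mul_ne_one {θ : ℝ} (hθ : θ ∈ Ioo 0 1) :
    exp (2 * Real.pi * I * θ) ≠ 1 := by
  rw [Ne, exp_eq_one_iff]
  rintro ⟨k, hk⟩
  have hθk : θ = k := by
    have h2πI : 2 * Real.pi * I ≠ 0 := by simp [Real.pi_ne_zero, I_ne_zero]
    exact_mod_cast mul_left_cancel₀ h2πI (hk.trans (mul_comm _ _))
  obtain ⟨h0, h1⟩ := hθk ▸ hθ
  have : (0 : ℤ) < k ∧ k < 1 := ⟨by exact_mod_cast h0, by exact_mod_cast h1⟩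
  omega

theorem hasDerivAt_mul_exp_two_pi_I (m : ℂ) (t : ℝ) :
    HasDerivAt (fun s : ℝ => m * exp (2 * Real.pi * I * s))
      (2 * Real.pi * I * m * exp (2 * Real.pi * I * t)) t := by
  have := (((hasDerivAt_id (t : ℂ)).const_mul (2 * Real.pi * I)).cexp.const_mul m).comp_ofReal
  convert this using 1 <;> simp only [id, mul_one]; ring

theorem norm_two_pi_I_mul_mul_exp (m : ℂ) (t : ℝ) :
    ‖2 * Real.pi * I * m * exp (2 * Real.pi * I * t)‖ = 2 * Real.pi * ‖m‖ := by
  simp [norm_exp, Real.pi_pos.le]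

theorem isLittleO_segIntegral_sub_of_tendstoUniformlyOn_arc {ι : Type*} {l : Filter ι}
    {f : ℂ → ℂ} (hf : Differentiable ℂ f) {m : ι → ℂ} {θ : ℝ} (hθ : 0 < θ) {a : ℂ}
    (hunif : TendstoUniformlyOn (fun n (t : ℝ) => f (m n * exp (2 * Real.pi * I * t)))
      (fun _ => a) l (Icc 0 θ)) :
    (fun n => segIntegral f (m n) (m n * exp (2 * Real.pi * I * θ))
      - a * (exp (2 * Real.pi * I * θ) - 1) * m n) =o[l] m := by
  refine isLittleO_iff.2 fun c hc => ?_
  filter_upwards [Metric.tendstoUniformlyOn_iff.1 hunif (c / (2 * Real.pi * θ)) (by positivity)]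
    with n hn
  have hbound := norm_segIntegral_sub_le hf (hasDerivAt_mul_exp_two_pi_I (m n)) (by fun_prop)
    hθ.le (fun t _ => (norm_two_pi_I_mul_mul_exp (m n) t).le)
    (fun t ht => by rw [← dist_eq_norm, dist_comm]; exact (hn t ht).le)
  have hθ' : 2 * Real.pi * θ ≠ 0 := by positivity
  calc _ = _ := by simp only [ofReal_zero, mul_zero, exp_zero, mul_one]; ring_nf
    _ ≤ 2 * Real.pi * ‖m n‖ * (c / (2 * Real.pi * θ)) * θ := hbound
    _ = c * ‖m n‖ := by field_simp

theorem stmt_4 (m : ℕ → ℂ) (hm : Tendsto (fun n => ‖m n‖) atTop atTop)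
    (θ : ℝ) (hθ : θ ∈ Set.Ioo (0:ℝ) 1) (a : ℂ) (ha : a ≠ 0) :
    ¬ ∃ f : ℂ → ℂ, Differentiable ℂ f ∧
      TendstoUniformlyOn
        (fun n (t : ℝ) => f (m n * Complex.exp (2 * Real.pi * Complex.I * t)))
        (fun _ => a) atTop (Set.Icc 0 θ) ∧
      Tendsto
        (fun n => segIntegral f (m n) (m n * Complex.exp (2 * Real.pi * Complex.I * θ)))
        atTop (nhds 0) := by
  rintro ⟨f, hf, hunif, hint⟩
  have hclose := isLittleO_segIntegral_sub_of_tendstoUniformlyOn_arc hf hθ.1 hunif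
  have hsmall : (fun n => segIntegral f (m n) (m n * exp (2 * Real.pi * I * θ))) =o[atTop] m :=
    (hint.isBigO_one ℂ).trans_isLittleO (isLittleO_const_left.2 (Or.inr hm))
  have hlinear : (fun n => a * (exp (2 * Real.pi * I * θ) - 1) * m n) =o[atTop] m := by
    simpa using hsmall.sub hclose
  rw [isLittleO_const_mul_left_iff (mul_ne_zero ha (sub_ne_zero.2 (exp_two_pi_I_mul_ne_one hθ)))]
    at hlinear
  refine isLittleO_irrefl ?_ hlinear
  exact (hm.eventually_gt_atTop 0).frequently.mono fun n hn => norm_pos_iff.1 hn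
end

section
/- Let (λ_n) be a sequence of nonzero complex numbers with λ_n → ∞, θ ∈ (0,1), and G an entire function with G(0) = 0 and G′(0) ≠ 0. Then there is no entire function f and no sequence (m_n) with m_n ∈ {λ_k : k ∈ ℕ} such that for every compact L ⊆ ℂ, sup_{(t,z)∈[0,θ]×L} |f(z + m_n e^{2πit}) − G(z)| → 0 as n → ∞. -/
/-!
If `f (z + m_n e^{2πit}) → G z` uniformly, then evaluating at `(t, z) = (0, w)` and `(t, 0)` with
`w = m_n (e^{2πit} - 1)` shows that `f (m_n e^{2πit})` is close both to `G w` and to `G 0 = 0`.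
Since `|m_n|` is bounded below, `t` can be chosen so that `|w|` is any prescribed small size, while
the approximation error can be made small compared with it. Hence `|G w| = o(|w|)` along a sequence
`w → 0`, `w ≠ 0`, which contradicts `G'(0) ≠ 0`.
-/

open Complex Filter Set Topology

theorem exists_pos_le_norm_of_tendsto_atTop {E : Type*} [NormedAddCommGroup E] {u : ℕ → E}
    (hu0 : ∀ n, u n ≠ 0) (hu : Tendsto (fun n => ‖u n‖) atTop atTop) :
    ∃ δ > 0, ∀ n, δ ≤ ‖u n‖ := by
  obtain ⟨k, hk⟩ := (Nat.cofinite_eq_atTop ▸ hu).exists_forall_le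
  exact ⟨‖u k‖, norm_pos_iff.mpr (hu0 k), hk⟩

theorem HasDerivAt.exists_pos_mul_norm_sub_le {𝕜 F : Type*} [NontriviallyNormedField 𝕜]
    [NormedAddCommGroup F] [NormedSpace 𝕜 F] {f : 𝕜 → F} {f' : F} {x : 𝕜}
    (hf : HasDerivAt f f' x) (hf' : f' ≠ 0) :
    ∃ ε > 0, ∀ᶠ y in 𝓝 x, ε * ‖y - x‖ ≤ ‖f y - f x‖ := by
  have hpair : Tendsto (fun y => (y, x)) (𝓝 x) (𝓝 x ×ˢ pure x) :=
    tendsto_id.prodMk tendsto_const_pure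
  obtain ⟨C, hC, hbound⟩ := ((hf.isTheta_sub hf').isBigO_symm.comp_tendsto hpair).exists_pos
  refine ⟨C⁻¹, inv_pos.mpr hC, hbound.bound.mono fun y hy => ?_⟩
  rwa [inv_mul_le_iff₀ hC]

theorem norm_exp_two_pi_I_mul_sub_one_mem_Icc {t : ℝ} (h0 : 0 ≤ t) (h1 : t ≤ 1 / 2) :
    ‖exp (2 * Real.pi * I * t) - 1‖ ∈ Icc (4 * t) (2 * Real.pi * t) := by
  have hπt : 0 ≤ Real.pi * t := by positivity
  have hπt' : Real.pi * t ≤ Real.pi / 2 := by nlinarith [Real.pi_pos]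
  have hsin : ‖exp (2 * Real.pi * I * t) - 1‖ = 2 * Real.sin (Real.pi * t) := by
    have := norm_exp_I_mul_ofReal_sub_one (2 * Real.pi * t)
    rw [show I * ((2 * Real.pi * t : ℝ) : ℂ) = 2 * Real.pi * I * t by push_cast; ring,
      show 2 * Real.pi * t / 2 = Real.pi * t by ring] at this
    rw [this, norm_mul, Real.norm_of_nonneg
      (Real.sin_nonneg_of_nonneg_of_le_pi hπt (by linarith [Real.pi_pos]))]
    norm_num
  have hjordan : 2 * t ≤ Real.sin (Real.pi * t) := by
    have := Real.mul_le_sin hπt hπt'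
    rwa [← mul_assoc, div_mul_cancel₀ _ Real.pi_ne_zero] at this
  rw [hsin]
  constructor <;> linarith [Real.sin_le hπt]

theorem frequently_norm_lt_mul_norm_of_tendstoUniformlyOn {ι : Type*} {l : Filter ι} [l.NeBot]
    {f G : ℂ → ℂ} {m : ι → ℂ} {δ θ : ℝ} (hδ : 0 < δ) (hm : ∀ᶠ i in l, δ ≤ ‖m i‖) (hθ : 0 < θ)
    (hG0 : G 0 = 0)
    (hfG : ∀ r, TendstoUniformlyOn
      (fun i (p : ℝ × ℂ) => f (p.2 + m i * exp (2 * Real.pi * I * p.1)))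
      (fun p => G p.2) l (Icc 0 θ ×ˢ Metric.closedBall 0 r))
    {ε : ℝ} (hε : 0 < ε) : ∃ᶠ w in 𝓝 0, ‖G w‖ < ε * ‖w‖ := by
  rw [Metric.nhds_basis_closedBall.frequently_iff]
  intro r hr
  -- `c` is the size of `t * |m i|`; it keeps `t ≤ θ`, `t ≤ 1/2` and `|w| ≤ r`.
  set c := min (min (θ * δ) (δ / 2)) (r / (2 * Real.pi))
  have hc : 0 < c := by positivity
  have hcθ : c ≤ θ * δ := (min_le_left _ _).trans (min_le_left _ _)
  have hcδ : c ≤ δ / 2 := (min_le_left _ _).trans (min_le_right _ _)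
  have hcr : 2 * Real.pi * c ≤ r := by
    have := min_le_right (min (θ * δ) (δ / 2)) (r / (2 * Real.pi))
    rwa [le_div_iff₀' (by positivity)] at this
  obtain ⟨i, hi, hδi⟩ :=
    ((Metric.tendstoUniformlyOn_iff.mp (hfG r) (2 * ε * c) (by positivity)).and hm).exists
  set M := ‖m i‖
  have hM : 0 < M := hδ.trans_le hδi
  set t := c / M
  have ht0 : 0 ≤ t := by positivity
  have htθ : t ≤ θ := by
    rw [div_le_iff₀ hM]; nlinarith
  have ht2 : t ≤ 1 / 2 := by
    rw [div_le_iff₀ hM]; linarith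
  have hMt : M * t = c := mul_div_cancel₀ c hM.ne'
  obtain ⟨hlow, hup⟩ := norm_exp_two_pi_I_mul_sub_one_mem_Icc ht0 ht2
  set e := exp (2 * Real.pi * I * t)
  set w := m i * (e - 1)
  have hw_low : 4 * c ≤ ‖w‖ := calc
    4 * c = M * (4 * t) := by rw [← hMt]; ring
    _ ≤ ‖w‖ := by rw [norm_mul]; gcongr
  have hw_up : ‖w‖ ≤ r := calc
    ‖w‖ ≤ M * (2 * Real.pi * t) := by rw [norm_mul]; gcongr
    _ = 2 * Real.pi * c := by rw [← hMt]; ring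
    _ ≤ r := hcr
  have hnear_w : dist (G w) (f (m i * e)) < 2 * ε * c := by
    simpa [w, mul_sub] using hi (0, w) ⟨⟨le_rfl, hθ.le⟩, by simpa using hw_up⟩
  have hnear_0 : dist (G 0) (f (m i * e)) < 2 * ε * c := by
    simpa using hi (t, 0) ⟨⟨ht0, htθ⟩, by simpa using hr.le⟩
  refine ⟨w, by simpa using hw_up, ?_⟩
  calc ‖G w‖ = dist (G w) (G 0) := by rw [hG0, dist_zero_right]
    _ ≤ dist (G w) (f (m i * e)) + dist (G 0) (f (m i * e)) := dist_triangle_right _ _ _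
    _ < ε * (4 * c) := by linarith
    _ ≤ ε * ‖w‖ := by gcongr

theorem stmt_7 (lam : ℕ → ℂ) (hlam0 : ∀ n, lam n ≠ 0)
    (hlam : Tendsto (fun n => ‖lam n‖) atTop atTop)
    (θ : ℝ) (hθ : θ ∈ Set.Ioo (0:ℝ) 1)
    (G : ℂ → ℂ) (hG : Differentiable ℂ G) (hG0 : G 0 = 0) (hG' : deriv G 0 ≠ 0) :
    ¬ ∃ (f : ℂ → ℂ) (m : ℕ → ℂ), Differentiable ℂ f ∧ (∀ n, ∃ k, m n = lam k) ∧
      ∀ L : Set ℂ, IsCompact L →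
        TendstoUniformlyOn
          (fun n (p : ℝ × ℂ) => f (p.2 + m n * Complex.exp (2 * Real.pi * Complex.I * p.1)))
          (fun p => G p.2) atTop (Set.Icc 0 θ ×ˢ L) := by
  rintro ⟨f, m, -, hmem, hfG⟩
  obtain ⟨δ, hδ, hδlam⟩ := exists_pos_le_norm_of_tendsto_atTop hlam0 hlam
  have hδm : ∀ᶠ n in atTop, δ ≤ ‖m n‖ := Eventually.of_forall fun n => by
    obtain ⟨k, hk⟩ := hmem n
    exact hk ▸ hδlam k
  obtain ⟨ε, hε, hlin⟩ := (hG 0).hasDerivAt.exists_pos_mul_norm_sub_le hG'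
  obtain ⟨w, hsmall, hbig⟩ := ((frequently_norm_lt_mul_norm_of_tendstoUniformlyOn hδ hδm hθ.1 hG0
    (fun r => hfG _ (isCompact_closedBall 0 r)) hε).and_eventually hlin).exists
  rw [hG0, sub_zero, sub_zero] at hbig
  exact hsmall.not_ge hbig
end
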